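/- Bayes error rate for learned representations (exact-mutual-information form of Theorem 3): let T, X, X', Z be finite-valued random variables such that I(Z; (X', T) | X) = 0, and define the Bayes error rate P_e = ∑_{z : P(Z=z)>0} P(Z=z) · (1 - max_t P(T=t | Z=z)). Then P_e ≤ 1 - exp(-( H(T) + I(X; X' | T) + I(Z; X | (X', T)) - I(Z; X') )). -/

import Mathlib

/-
Discrete probability setup: a finite sample space `Ω` with weight function `p`
(nonnegative, summing to 1).  Random variables are functions out of `Ω` into
nonempty finite sets.  `pr p X x = P(X = x)`, `ent` is Shannon entropy
(natural log, with `0 · log 0 = 0` since `Real.log 0 = 0`), `mi` is mutual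
information `I(X;Y) = H(X) + H(Y) - H(X,Y)`, and `cmi` is conditional mutual
information `I(X;Y|W) = ∑ w, P(W=w) · I(X;Y | W=w)` computed with respect to
the conditional distribution `condp p W w` (terms with `P(W=w)=0` vanish).
`klDivF` is the discrete Kullback–Leibler divergence with the convention that
terms with `p s = 0` contribute `0` (indeed `0 * log 0 = 0` in Lean).
-/

open scoped Classical
open Finset

noncomputable def pr {Ω α : Type*} [Fintype Ω] (p : Ω → ℝ) (X : Ω → α) (x : α) : ℝ :=
  ∑ ω, if X ω = x then p ω else 0

noncomputable def ent {Ω α : Type*} [Fintype Ω] [Fintype α] (p : Ω → ℝ) (X : Ω → α) : ℝ :=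
  -∑ x, pr p X x * Real.log (pr p X x)

noncomputable def mi {Ω α β : Type*} [Fintype Ω] [Fintype α] [Fintype β]
    (p : Ω → ℝ) (X : Ω → α) (Y : Ω → β) : ℝ :=
  ent p X + ent p Y - ent p (fun ω => (X ω, Y ω))

noncomputable def condp {Ω γ : Type*} [Fintype Ω] (p : Ω → ℝ) (W : Ω → γ) (w : γ) : Ω → ℝ :=
  fun ω => if W ω = w then p ω / pr p W w else 0

noncomputable def cmi {Ω α β γ : Type*} [Fintype Ω] [Fintype α] [Fintype β] [Fintype γ]
    (p : Ω → ℝ) (X : Ω → α) (Y : Ω → β) (W : Ω → γ) : ℝ :=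
  ∑ w, pr p W w * mi (condp p W w) X Y

noncomputable def klDivF {S : Type*} [Fintype S] (p q : S → ℝ) : ℝ :=
  ∑ s, p s * Real.log (p s / q s)

set_option linter.unusedSectionVars false

section Aux
variable {Ω α β γ : Type*} [Fintype Ω] [Fintype α] [Fintype β] [Fintype γ]

lemma pr_nonneg (p : Ω → ℝ) (hp : ∀ ω, 0 ≤ p ω) (X : Ω → α) (x : α) : 0 ≤ pr p X x :=
  Finset.sum_nonneg fun ω _ => by by_cases h : X ω = x <;> simp [h, hp ω]

lemma sum_pr (p : Ω → ℝ) (X : Ω → α) : ∑ x, pr p X x = ∑ ω, p ω := by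
  unfold pr
  rw [Finset.sum_comm]
  exact Finset.sum_congr rfl fun ω _ => by simp

lemma pr_marg_right (p : Ω → ℝ) (A : Ω → α) (W : Ω → γ) (w : γ) :
    ∑ a, pr p (fun ω => (A ω, W ω)) (a, w) = pr p W w := by
  unfold pr
  rw [Finset.sum_comm]
  refine Finset.sum_congr rfl fun ω _ => ?_
  by_cases hw : W ω = w <;> simp [Prod.ext_iff, hw]

lemma pr_marg_left (p : Ω → ℝ) (A : Ω → α) (B : Ω → β) (a : α) :
    ∑ b, pr p (fun ω => (A ω, B ω)) (a, b) = pr p A a := by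
  unfold pr
  rw [Finset.sum_comm]
  refine Finset.sum_congr rfl fun ω _ => ?_
  by_cases ha : A ω = a <;> simp [Prod.ext_iff, ha]

lemma pr_pair_le_right (p : Ω → ℝ) (hp : ∀ ω, 0 ≤ p ω) (A : Ω → α) (W : Ω → γ)
    (a : α) (w : γ) : pr p (fun ω => (A ω, W ω)) (a, w) ≤ pr p W w := by
  rw [← pr_marg_right p A W w]
  exact Finset.single_le_sum (f := fun a => pr p (fun ω => (A ω, W ω)) (a, w))
    (fun x _ => pr_nonneg p hp _ _) (Finset.mem_univ a)

lemma pr_pair_le_left (p : Ω → ℝ) (hp : ∀ ω, 0 ≤ p ω) (A : Ω → α) (B : Ω → β)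
    (a : α) (b : β) : pr p (fun ω => (A ω, B ω)) (a, b) ≤ pr p A a := by
  rw [← pr_marg_left p A B a]
  exact Finset.single_le_sum (f := fun b => pr p (fun ω => (A ω, B ω)) (a, b))
    (fun x _ => pr_nonneg p hp _ _) (Finset.mem_univ b)

lemma pr_condp (p : Ω → ℝ) (W : Ω → γ) (w : γ) (A : Ω → α) (a : α) :
    pr (condp p W w) A a = pr p (fun ω => (A ω, W ω)) (a, w) / pr p W w := by
  unfold pr condp
  rw [Finset.sum_div]
  refine Finset.sum_congr rfl fun ω _ => ?_
  by_cases ha : A ω = a <;> by_cases hw : W ω = w <;> simp [Prod.ext_iff, ha, hw, pr]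

lemma condp_nonneg (p : Ω → ℝ) (hp : ∀ ω, 0 ≤ p ω) (W : Ω → γ) (w : γ) (ω : Ω) :
    0 ≤ condp p W w ω := by
  unfold condp
  split
  · exact div_nonneg (hp ω) (pr_nonneg p hp W w)
  · exact le_refl 0

lemma sum_condp (p : Ω → ℝ) (W : Ω → γ) (w : γ) (hw : pr p W w ≠ 0) :
    ∑ ω, condp p W w ω = 1 := by
  unfold condp
  have : ∀ ω, (if W ω = w then p ω / pr p W w else 0)
      = (if W ω = w then p ω else 0) / pr p W w := by
    intro ω; split <;> simp
  simp_rw [this]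
  rw [← Finset.sum_div]
  rw [show (∑ ω, if W ω = w then p ω else 0) = pr p W w from rfl]
  field_simp

lemma ent_comp_inj (p : Ω → ℝ) (f : α → β) (hf : Function.Injective f) (Y : Ω → α) :
    ent p (fun ω => f (Y ω)) = ent p Y := by
  unfold ent
  congr 1
  have hpr : ∀ a, pr p (fun ω => f (Y ω)) (f a) = pr p Y a := by
    intro a
    unfold pr
    exact Finset.sum_congr rfl fun ω _ => by simp [hf.eq_iff]
  have h0 : ∀ b ∉ Finset.univ.image f, pr p (fun ω => f (Y ω)) b = 0 := by
    intro b hb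
    unfold pr
    refine Finset.sum_eq_zero fun ω _ => ?_
    have : f (Y ω) ≠ b := fun e => hb (by simp [← e])
    simp [this]
  rw [← Finset.sum_subset (Finset.subset_univ (Finset.univ.image f))
      (fun b _ hb => by simp [h0 b hb])]
  rw [Finset.sum_image (fun x _ y _ e => hf e)]
  exact Finset.sum_congr rfl fun a _ => by rw [hpr a]


lemma mi_nonneg (q : Ω → ℝ) (hq : ∀ ω, 0 ≤ q ω) (hq1 : ∑ ω, q ω = 1)
    (A : Ω → α) (B : Ω → β) : 0 ≤ mi q A B := by
  set j : α → β → ℝ := fun a b => pr q (fun ω => (A ω, B ω)) (a, b) with hj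
  have hjnn : ∀ a b, 0 ≤ j a b := fun a b => pr_nonneg q hq _ _
  have hpa : ∀ a, ∑ b, j a b = pr q A a := fun a => pr_marg_left q A B a
  have hpb : ∀ b, ∑ a, j a b = pr q B b := fun b => pr_marg_right q A B b
  have hA : ent q A = -∑ a, ∑ b, j a b * Real.log (pr q A a) := by
    unfold ent
    congr 1
    refine Finset.sum_congr rfl fun a _ => ?_
    rw [← hpa a, Finset.sum_mul]
  have hB : ent q B = -∑ a, ∑ b, j a b * Real.log (pr q B b) := by
    unfold ent
    rw [Finset.sum_comm]
    congr 1
    refine Finset.sum_congr rfl fun b _ => ?_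
    rw [← hpb b, Finset.sum_mul]
  have hAB : ent q (fun ω => (A ω, B ω)) = -∑ a, ∑ b, j a b * Real.log (j a b) := by
    unfold ent
    rw [Fintype.sum_prod_type]
  have key : ∀ a b, j a b * Real.log (pr q A a) + j a b * Real.log (pr q B b)
      - j a b * Real.log (j a b) ≤ pr q A a * pr q B b - j a b := by
    intro a b
    rcases eq_or_lt_of_le (hjnn a b) with h0 | h0
    · simp [← h0, mul_nonneg (pr_nonneg q hq A a) (pr_nonneg q hq B b)]
    · have hpa0 : 0 < pr q A a := lt_of_lt_of_le h0 (pr_pair_le_left q hq A B a b)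
      have hpb0 : 0 < pr q B b := lt_of_lt_of_le h0 (pr_pair_le_right q hq A B a b)
      have hlog : Real.log (pr q A a * pr q B b / j a b)
          ≤ pr q A a * pr q B b / j a b - 1 :=
        Real.log_le_sub_one_of_pos (by positivity)
      rw [Real.log_div (by positivity) (ne_of_gt h0), Real.log_mul (ne_of_gt hpa0) (ne_of_gt hpb0)] at hlog
      have h5 := mul_le_mul_of_nonneg_left hlog (le_of_lt h0)
      have hc : pr q A a * pr q B b / j a b * j a b = pr q A a * pr q B b :=
        div_mul_cancel₀ _ (ne_of_gt h0)
      nlinarith [h5, hc]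
  have hsumkey : ∑ a, ∑ b, (j a b * Real.log (pr q A a) + j a b * Real.log (pr q B b)
      - j a b * Real.log (j a b)) ≤ ∑ a, ∑ b, (pr q A a * pr q B b - j a b) :=
    Finset.sum_le_sum fun a _ => Finset.sum_le_sum fun b _ => key a b
  have h1 : ∑ a, ∑ b, pr q A a * pr q B b = 1 := by
    have : ∀ a, ∑ b, pr q A a * pr q B b = pr q A a * ∑ b, pr q B b := fun a =>
      (Finset.mul_sum _ _ _).symm
    simp_rw [this, sum_pr, hq1, mul_one]
    rw [sum_pr, hq1]
  have h2 : ∑ a, ∑ b, j a b = 1 := by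
    simp_rw [hpa, sum_pr, hq1]
  have h3 : ∑ a, ∑ b, (pr q A a * pr q B b - j a b) = 0 := by
    rw [Finset.sum_congr rfl fun a _ => Finset.sum_sub_distrib _ _, Finset.sum_sub_distrib, h1, h2]
    ring
  have h4 : ∑ a, ∑ b, (j a b * Real.log (pr q A a) + j a b * Real.log (pr q B b)
      - j a b * Real.log (j a b))
      = (∑ a, ∑ b, j a b * Real.log (pr q A a)) + (∑ a, ∑ b, j a b * Real.log (pr q B b))
        - ∑ a, ∑ b, j a b * Real.log (j a b) := by
    simp only [Finset.sum_sub_distrib, Finset.sum_add_distrib]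
  unfold mi
  rw [hA, hB, hAB]
  rw [h3] at hsumkey
  rw [h4] at hsumkey
  linarith

lemma cmi_nonneg (p : Ω → ℝ) (hp : ∀ ω, 0 ≤ p ω)
    (A : Ω → α) (B : Ω → β) (W : Ω → γ) : 0 ≤ cmi p A B W := by
  refine Finset.sum_nonneg fun w _ => ?_
  rcases eq_or_lt_of_le (pr_nonneg p hp W w) with h0 | h0
  · rw [← h0, zero_mul]
  · exact mul_nonneg (le_of_lt h0)
      (mi_nonneg _ (condp_nonneg p hp W w) (sum_condp p W w (ne_of_gt h0)) A B)

lemma condent (p : Ω → ℝ) (hp : ∀ ω, 0 ≤ p ω) (A : Ω → α) (W : Ω → γ) :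
    ∑ w, pr p W w * ent (condp p W w) A
      = ent p (fun ω => (A ω, W ω)) - ent p W := by
  set j : α → γ → ℝ := fun a w => pr p (fun ω => (A ω, W ω)) (a, w) with hj
  have key : ∀ w a, pr p W w * (pr (condp p W w) A a * Real.log (pr (condp p W w) A a))
      = j a w * Real.log (j a w) - j a w * Real.log (pr p W w) := by
    intro w a
    rw [pr_condp]
    simp only [hj]
    rcases eq_or_lt_of_le (pr_nonneg p hp W w) with h0 | h0
    · have hj0 : pr p (fun ω => (A ω, W ω)) (a, w) = 0 :=
        le_antisymm (by rw [h0]; exact pr_pair_le_right p hp A W a w) (pr_nonneg p hp _ _)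
      rw [hj0, ← h0]
      simp
    · rcases eq_or_lt_of_le (pr_nonneg p hp (fun ω => (A ω, W ω)) (a, w)) with hj0 | hj0
      · rw [← hj0]
        simp
      · have h0' : pr p W w ≠ 0 := ne_of_gt h0
        have hj0' : pr p (fun ω => (A ω, W ω)) (a, w) ≠ 0 := ne_of_gt hj0
        rw [Real.log_div hj0' h0']
        field_simp
  have lhs : ∑ w, pr p W w * ent (condp p W w) A
      = -∑ w, ∑ a, pr p W w * (pr (condp p W w) A a * Real.log (pr (condp p W w) A a)) := by
    unfold ent
    rw [← Finset.sum_neg_distrib]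
    refine Finset.sum_congr rfl fun w _ => ?_
    rw [mul_neg, Finset.mul_sum]
  rw [lhs]
  simp_rw [key]
  rw [Finset.sum_congr rfl fun w _ => Finset.sum_sub_distrib _ _, Finset.sum_sub_distrib]
  have hAW : ent p (fun ω => (A ω, W ω)) = -∑ w, ∑ a, j a w * Real.log (j a w) := by
    unfold ent
    rw [Fintype.sum_prod_type, Finset.sum_comm]
  have hW : ent p W = -∑ w, ∑ a, j a w * Real.log (pr p W w) := by
    unfold ent
    congr 1
    refine Finset.sum_congr rfl fun w _ => ?_
    rw [show ∑ a, j a w * Real.log (pr p W w) = (∑ a, j a w) * Real.log (pr p W w) from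
      (Finset.sum_mul _ _ _).symm, pr_marg_right]
  rw [hAW, hW]
  ring

lemma cmi_eq (p : Ω → ℝ) (hp : ∀ ω, 0 ≤ p ω) (A : Ω → α) (B : Ω → β) (W : Ω → γ) :
    cmi p A B W = ent p (fun ω => (A ω, W ω)) + ent p (fun ω => (B ω, W ω))
      - ent p (fun ω => ((A ω, B ω), W ω)) - ent p W := by
  unfold cmi mi
  have : ∀ w, pr p W w * (ent (condp p W w) A + ent (condp p W w) B
      - ent (condp p W w) fun ω => (A ω, B ω))
      = pr p W w * ent (condp p W w) A + pr p W w * ent (condp p W w) B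
        - pr p W w * ent (condp p W w) (fun ω => (A ω, B ω)) := fun w => by ring
  simp_rw [this]
  rw [Finset.sum_sub_distrib, Finset.sum_add_distrib, condent p hp A W, condent p hp B W,
    condent p hp (fun ω => (A ω, B ω)) W]
  ring


lemma ent_eq_of_inj (p : Ω → ℝ) (Y : Ω → α) (Y' : Ω → β) (f : α → β)
    (hf : Function.Injective f) (hfy : ∀ ω, f (Y ω) = Y' ω) :
    ent p Y' = ent p Y := by
  rw [show Y' = fun ω => f (Y ω) from funext fun ω => (hfy ω).symm]
  exact ent_comp_inj p f hf Y

lemma fano (q : Ω → ℝ) (hq : ∀ ω, 0 ≤ q ω) (hq1 : ∑ ω, q ω = 1) (Tv : Ω → α) [Nonempty α] :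
    Real.exp (-ent q Tv) ≤ Finset.univ.sup' Finset.univ_nonempty (fun t => pr q Tv t) := by
  have hsum : ∑ t, pr q Tv t = 1 := by rw [sum_pr, hq1]
  have hex : ∃ t, 0 < pr q Tv t := by
    obtain ⟨t0, ht0⟩ := Finset.exists_ne_zero_of_sum_ne_zero (by rw [hsum]; norm_num :
      ∑ t, pr q Tv t ≠ 0)
    exact ⟨t0, lt_of_le_of_ne (pr_nonneg q hq Tv t0) (Ne.symm ht0.2)⟩
  obtain ⟨t0, ht0⟩ := hex
  set m := Finset.univ.sup' Finset.univ_nonempty (fun t => pr q Tv t) with hmm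
  have hm : 0 < m := lt_of_lt_of_le ht0 (Finset.le_sup' _ (Finset.mem_univ t0))
  have hent : -Real.log m ≤ ent q Tv := by
    unfold ent
    have hterm : ∀ t, pr q Tv t * Real.log (pr q Tv t) ≤ pr q Tv t * Real.log m := by
      intro t
      rcases eq_or_lt_of_le (pr_nonneg q hq Tv t) with h0 | h0
      · rw [← h0]; simp
      · exact mul_le_mul_of_nonneg_left
          (Real.log_le_log h0 (Finset.le_sup' _ (Finset.mem_univ t))) h0.le
    have hs : ∑ t, pr q Tv t * Real.log (pr q Tv t) ≤ ∑ t, pr q Tv t * Real.log m :=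
      Finset.sum_le_sum (fun t _ => hterm t)
    rw [← Finset.sum_mul, hsum, one_mul] at hs
    linarith
  calc Real.exp (-ent q Tv) ≤ Real.exp (Real.log m) := Real.exp_le_exp.mpr (by linarith)
    _ = m := Real.exp_log hm

lemma jensen_exp {ι : Type*} [Fintype ι] (w x : ι → ℝ) (hw : ∀ i, 0 ≤ w i)
    (h1 : ∑ i, w i = 1) : Real.exp (∑ i, w i * x i) ≤ ∑ i, w i * Real.exp (x i) := by
  set c := ∑ i, w i * x i with hc
  have key : ∀ i, w i * (Real.exp c * (x i - c + 1)) ≤ w i * Real.exp (x i) := by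
    intro i
    refine mul_le_mul_of_nonneg_left ?_ (hw i)
    have h2 := Real.add_one_le_exp (x i - c)
    have h3 : Real.exp c * (x i - c + 1) ≤ Real.exp c * Real.exp (x i - c) :=
      mul_le_mul_of_nonneg_left h2 (Real.exp_pos c).le
    have h4 : c + (x i - c) = x i := by ring
    rwa [← Real.exp_add, h4] at h3
  have hsum : ∑ i, w i * (Real.exp c * (x i - c + 1)) = Real.exp c := by
    have hterm : ∀ i, w i * (Real.exp c * (x i - c + 1))
        = Real.exp c * (w i * x i) + (Real.exp c * (1 - c)) * w i := fun i => by ring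
    simp_rw [hterm]
    rw [Finset.sum_add_distrib, ← Finset.mul_sum, ← Finset.mul_sum, ← hc, h1]
    ring
  calc Real.exp c = ∑ i, w i * (Real.exp c * (x i - c + 1)) := hsum.symm
    _ ≤ ∑ i, w i * Real.exp (x i) := Finset.sum_le_sum fun i _ => key i

end Aux

/-- Bayes error rate for learned representations.  If
`I(Z; (X',T) | X) = 0` and
`P_e = ∑_z P(Z=z) (1 - max_t P(T=t|Z=z))`, then
`P_e ≤ 1 - exp (-(H(T) + I(X;X'|T) + I(Z;X|(X',T)) - I(Z;X')))`. -/
theorem bayes_error_rate_learned_representations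
    {Ω 𝒯 𝒳 𝒳' 𝒵 : Type*} [Fintype Ω] [Fintype 𝒯] [Fintype 𝒳] [Fintype 𝒳'] [Fintype 𝒵]
    [Nonempty 𝒯] [Nonempty 𝒳] [Nonempty 𝒳'] [Nonempty 𝒵]
    (p : Ω → ℝ) (hp : ∀ ω, 0 ≤ p ω) (hsum : ∑ ω, p ω = 1)
    (T : Ω → 𝒯) (X : Ω → 𝒳) (X' : Ω → 𝒳') (Z : Ω → 𝒵)
    (h : cmi p Z (fun ω => (X' ω, T ω)) X = 0)
    (Pe : ℝ)
    (hPe : Pe = ∑ z, pr p Z z *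
      (1 - Finset.univ.sup' Finset.univ_nonempty
        (fun t => pr p (fun ω => (T ω, Z ω)) (t, z) / pr p Z z))) :
    Pe ≤ 1 - Real.exp
      (-(ent p T + cmi p X X' T + cmi p Z X (fun ω => (X' ω, T ω)) - mi p Z X')) := by
  classical
  -- entropy relabeling identities
  have ea : ent p (fun ω => (T ω, X ω)) = ent p (fun ω => (X ω, T ω)) :=
    ent_eq_of_inj p _ _ (fun q : 𝒳 × 𝒯 => (q.2, q.1))
      (fun q r hqr => by simp [Prod.ext_iff] at hqr ⊢; tauto) (fun ω => rfl)
  have eb : ent p (fun ω => (Z ω, T ω)) = ent p (fun ω => (T ω, Z ω)) :=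
    ent_eq_of_inj p _ _ (fun q : 𝒯 × 𝒵 => (q.2, q.1))
      (fun q r hqr => by simp [Prod.ext_iff] at hqr ⊢; tauto) (fun ω => rfl)
  have ec1 : ent p (fun ω => (X ω, (X' ω, T ω))) = ent p (fun ω => ((X ω, X' ω), T ω)) :=
    ent_eq_of_inj p _ _ (fun q : (𝒳 × 𝒳') × 𝒯 => (q.1.1, (q.1.2, q.2)))
      (fun q r hqr => by simp [Prod.ext_iff] at hqr ⊢; tauto) (fun ω => rfl)
  have ec2 : ent p (fun ω => (T ω, (X ω, X' ω))) = ent p (fun ω => ((X ω, X' ω), T ω)) :=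
    ent_eq_of_inj p _ _ (fun q : (𝒳 × 𝒳') × 𝒯 => (q.2, q.1))
      (fun q r hqr => by simp [Prod.ext_iff] at hqr ⊢; tauto) (fun ω => rfl)
  have ec3 : ent p (fun ω => ((X' ω, T ω), X ω)) = ent p (fun ω => ((X ω, X' ω), T ω)) :=
    ent_eq_of_inj p _ _ (fun q : (𝒳 × 𝒳') × 𝒯 => ((q.1.2, q.2), q.1.1))
      (fun q r hqr => by simp [Prod.ext_iff] at hqr ⊢; tauto) (fun ω => rfl)
  have ed : ent p (fun ω => (X' ω, (Z ω, T ω))) = ent p (fun ω => (Z ω, (X' ω, T ω))) :=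
    ent_eq_of_inj p _ _ (fun q : 𝒵 × (𝒳' × 𝒯) => (q.2.1, (q.1, q.2.2)))
      (fun q r hqr => by simp [Prod.ext_iff] at hqr ⊢; tauto) (fun ω => rfl)
  have ee : ent p (fun ω => ((Z ω, T ω), X ω)) = ent p (fun ω => (X ω, (Z ω, T ω))) :=
    ent_eq_of_inj p _ _ (fun q : 𝒳 × (𝒵 × 𝒯) => (q.2, q.1))
      (fun q r hqr => by simp [Prod.ext_iff] at hqr ⊢; tauto) (fun ω => rfl)
  have ef : ent p (fun ω => (Z ω, (X ω, X' ω))) = ent p (fun ω => ((Z ω, X ω), X' ω)) :=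
    ent_eq_of_inj p _ _ (fun q : (𝒵 × 𝒳) × 𝒳' => (q.1.1, (q.1.2, q.2)))
      (fun q r hqr => by simp [Prod.ext_iff] at hqr ⊢; tauto) (fun ω => rfl)
  have eg1 : ent p (fun ω => ((X ω, X' ω), (Z ω, T ω)))
      = ent p (fun ω => ((Z ω, X ω), (X' ω, T ω))) :=
    ent_eq_of_inj p _ _ (fun q : (𝒵 × 𝒳) × (𝒳' × 𝒯) => ((q.1.2, q.2.1), (q.1.1, q.2.2)))
      (fun q r hqr => by simp [Prod.ext_iff] at hqr ⊢; tauto) (fun ω => rfl)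
  have eg2 : ent p (fun ω => ((Z ω, T ω), (X ω, X' ω)))
      = ent p (fun ω => ((Z ω, X ω), (X' ω, T ω))) :=
    ent_eq_of_inj p _ _ (fun q : (𝒵 × 𝒳) × (𝒳' × 𝒯) => ((q.1.1, q.2.2), (q.1.2, q.2.1)))
      (fun q r hqr => by simp [Prod.ext_iff] at hqr ⊢; tauto) (fun ω => rfl)
  have eg3 : ent p (fun ω => ((Z ω, (X' ω, T ω)), X ω))
      = ent p (fun ω => ((Z ω, X ω), (X' ω, T ω))) :=
    ent_eq_of_inj p _ _ (fun q : (𝒵 × 𝒳) × (𝒳' × 𝒯) => ((q.1.1, q.2), q.1.2))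
      (fun q r hqr => by simp [Prod.ext_iff] at hqr ⊢; tauto) (fun ω => rfl)
  -- conditional entropy H(T|Z)
  have hcond := condent p hp T Z
  -- the key information inequality
  have hkey : ent p (fun ω => (T ω, Z ω)) - ent p Z
      ≤ ent p T + cmi p X X' T + cmi p Z X (fun ω => (X' ω, T ω)) - mi p Z X' := by
    have c1 := cmi_nonneg p hp X X' (fun ω => (Z ω, T ω))
    have c2 := cmi_nonneg p hp Z T X
    have c3 := cmi_nonneg p hp Z X X'
    have c4 := cmi_nonneg p hp Z T (fun ω => (X ω, X' ω))
    have iden : ent p T + cmi p X X' T + cmi p Z X (fun ω => (X' ω, T ω)) - mi p Z X'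
        - (ent p (fun ω => (T ω, Z ω)) - ent p Z)
        = cmi p X X' (fun ω => (Z ω, T ω)) + cmi p Z T X + cmi p Z X X'
          + cmi p Z T (fun ω => (X ω, X' ω)) - cmi p Z (fun ω => (X' ω, T ω)) X := by
      rw [cmi_eq p hp X X' T, cmi_eq p hp Z X (fun ω => (X' ω, T ω)),
          cmi_eq p hp X X' (fun ω => (Z ω, T ω)), cmi_eq p hp Z T X, cmi_eq p hp Z X X',
          cmi_eq p hp Z T (fun ω => (X ω, X' ω)), cmi_eq p hp Z (fun ω => (X' ω, T ω)) X]
      unfold mi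
      rw [ea, eb, ec1, ec2, ec3, ed, ee, ef, eg1, eg2, eg3]
      ring
    linarith [iden, c1, c2, c3, c4, h]
  -- rewrite Pe using conditional probabilities
  have hPe' : Pe = 1 - ∑ z, pr p Z z *
      Finset.univ.sup' Finset.univ_nonempty (fun t => pr (condp p Z z) T t) := by
    rw [hPe]
    have hterm : ∀ z, pr p Z z * (1 - Finset.univ.sup' Finset.univ_nonempty
        (fun t => pr p (fun ω => (T ω, Z ω)) (t, z) / pr p Z z))
        = pr p Z z - pr p Z z *
          Finset.univ.sup' Finset.univ_nonempty (fun t => pr (condp p Z z) T t) := by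
      intro z
      have hfun : (fun t => pr p (fun ω => (T ω, Z ω)) (t, z) / pr p Z z)
          = fun t => pr (condp p Z z) T t := funext fun t => (pr_condp p Z z T t).symm
      rw [hfun]
      ring
    simp_rw [hterm]
    rw [Finset.sum_sub_distrib, sum_pr, hsum]
  -- Fano step
  have hstep1 : ∀ z, pr p Z z * Real.exp (-ent (condp p Z z) T)
      ≤ pr p Z z * Finset.univ.sup' Finset.univ_nonempty (fun t => pr (condp p Z z) T t) := by
    intro z
    rcases eq_or_lt_of_le (pr_nonneg p hp Z z) with h0 | h0
    · rw [← h0]; simp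
    · exact mul_le_mul_of_nonneg_left
        (fano (condp p Z z) (condp_nonneg p hp Z z) (sum_condp p Z z (ne_of_gt h0)) T) h0.le
  -- Jensen step
  have hstep2 : Real.exp (∑ z, pr p Z z * (-ent (condp p Z z) T))
      ≤ ∑ z, pr p Z z * Real.exp (-ent (condp p Z z) T) :=
    jensen_exp _ _ (fun z => pr_nonneg p hp Z z) (by rw [sum_pr, hsum])
  have hsum_neg : ∑ z, pr p Z z * (-ent (condp p Z z) T)
      = -(ent p (fun ω => (T ω, Z ω)) - ent p Z) := by
    rw [← hcond, ← Finset.sum_neg_distrib]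
    exact Finset.sum_congr rfl fun z _ => by ring
  have hstep1s : ∑ z, pr p Z z * Real.exp (-ent (condp p Z z) T)
      ≤ ∑ z, pr p Z z * Finset.univ.sup' Finset.univ_nonempty (fun t => pr (condp p Z z) T t) :=
    Finset.sum_le_sum fun z _ => hstep1 z
  have final1 : Real.exp (-(ent p (fun ω => (T ω, Z ω)) - ent p Z))
      ≤ ∑ z, pr p Z z * Finset.univ.sup' Finset.univ_nonempty (fun t => pr (condp p Z z) T t) := by
    rw [← hsum_neg]
    exact le_trans hstep2 hstep1s
  have final2 : Real.exp
      (-(ent p T + cmi p X X' T + cmi p Z X (fun ω => (X' ω, T ω)) - mi p Z X'))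
      ≤ Real.exp (-(ent p (fun ω => (T ω, Z ω)) - ent p Z)) :=
    Real.exp_le_exp.mpr (by linarith)
  rw [hPe']
  linarith
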